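/- arXiv:1609.06001 — 2 statements merged into one kernel-verified Lean document; each statement's English description precedes it below -/
import Mathlib

section
/- Under the setup of the tilted random walk and independent uniform U, the conditional law of τ⁺ given τ⁺ < ∞ under P_x equals the conditional law of τ⁺ given U ≤ exp(−θ(S_{τ⁺} − x)) under P_x^θ, and moreover for each k ≥ 1 the conditional law of (S_1,…,S_k) given τ⁺ = k under P_x equals the conditional law of (S_1,…,S_k) given {U ≤ exp(−θ(S_{τ⁺}−x))} ∩ {τ⁺ = k} under P_x^θ. -/
open MeasureTheory ProbabilityTheory

section Aux

lemma stmt4_unif_aux (c : ℝ) (h1 : 0 < c) (h2 : c ≤ 1) :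
    (volume.restrict (Set.Ioc (0 : ℝ) 1)) {u | u ≤ c} = ENNReal.ofReal c := by
  rw [Measure.restrict_apply' measurableSet_Ioc]
  have h : {u : ℝ | u ≤ c} ∩ Set.Ioc 0 1 = Set.Ioc 0 c := by
    ext u
    simp only [Set.mem_inter_iff, Set.mem_setOf_eq, Set.mem_Ioc]
    exact ⟨fun ⟨h, h0, _⟩ => ⟨h0, h⟩, fun ⟨h0, hc⟩ => ⟨hc, h0, hc.trans h2⟩⟩
  rw [h, Real.volume_Ioc, sub_zero]

end Aux

/-- Conditional laws: the law of τ⁺ given τ⁺<∞ under P_x equals the law of τ⁺ given acceptance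
under P_x^θ ⊗ Unif(0,1]; and for each k ≥ 1 and Borel sets B_i, the conditional law of
(S_1,…,S_k) given τ⁺ = k under P_x equals that given acceptance and τ⁺ = k under the tilted
measure. -/
theorem stmt4 {Ω : Type*} [MeasurableSpace Ω] (Px Pθ : Measure Ω)
    [IsProbabilityMeasure Px] [IsProbabilityMeasure Pθ]
    (S : ℕ → Ω → ℝ) (x θ : ℝ) (hx : x < 0) (hθ : 0 < θ)
    (hS0 : ∀ ω, S 0 ω = x)
    (hmeas : ∀ n, Measurable (S n))
    (hCramer : ∫ ω, Real.exp (θ * (S 1 ω - x)) ∂Px = 1)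
    (hRN : ∀ n : ℕ, 1 ≤ n → ∀ E : Set Ω,
      MeasurableSet[MeasurableSpace.comap (fun ω (i : Fin n) => S (i + 1) ω) inferInstance] E →
      Px E = ∫⁻ ω in E, ENNReal.ofReal (Real.exp (-θ * (S n ω - x))) ∂Pθ)
    (hfin : Pθ {ω | ∃ n, 0 ≤ S n ω} = 1) :
    (∀ k : ℕ,
      (Px[|{ω | ∃ n, 0 ≤ S n ω}]) {ω | sInf {n | 0 ≤ S n ω} = k}
        = ((Pθ.prod (volume.restrict (Set.Ioc (0 : ℝ) 1)))[|
            {p : Ω × ℝ | p.2 ≤ Real.exp (-θ * (S (sInf {n | 0 ≤ S n p.1}) p.1 - x))}])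
            {p : Ω × ℝ | sInf {n | 0 ≤ S n p.1} = k})
    ∧ (∀ k : ℕ, 1 ≤ k → ∀ B : Fin k → Set ℝ, (∀ i, MeasurableSet (B i)) →
      (Px[|{ω | sInf {n | 0 ≤ S n ω} = k}]) {ω | ∀ i : Fin k, S (i + 1) ω ∈ B i}
        = ((Pθ.prod (volume.restrict (Set.Ioc (0 : ℝ) 1)))[|
            {p : Ω × ℝ | p.2 ≤ Real.exp (-θ * (S (sInf {n | 0 ≤ S n p.1}) p.1 - x))}
              ∩ {p : Ω × ℝ | sInf {n | 0 ≤ S n p.1} = k}])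
            {p : Ω × ℝ | ∀ i : Fin k, S (i + 1) p.1 ∈ B i}) := by
  classical
  -- Notation
  set U : Measure ℝ := volume.restrict (Set.Ioc (0 : ℝ) 1) with hUdef
  set A : Set (Ω × ℝ) :=
    {p : Ω × ℝ | p.2 ≤ Real.exp (-θ * (S (sInf {n | 0 ≤ S n p.1}) p.1 - x))} with hAdef
  set Tfin : Set Ω := {ω | ∃ n, 0 ≤ S n ω} with hTfindef
  -- characterization of {T = k} for k ≥ 1
  have hTk : ∀ (k : ℕ), 1 ≤ k → ∀ ω,
      (sInf {n | 0 ≤ S n ω} = k ↔ 0 ≤ S k ω ∧ ∀ j < k, S j ω < 0) := by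
    intro k hk ω
    constructor
    · intro h
      have hne : {n | 0 ≤ S n ω}.Nonempty := by
        by_contra hne
        rw [Set.not_nonempty_iff_eq_empty] at hne
        simp only [hne, Nat.sInf_empty] at h
        omega
      have hmem : k ∈ {n | 0 ≤ S n ω} := h ▸ Nat.sInf_mem hne
      refine ⟨hmem, fun j hj => ?_⟩
      have : j ∉ {n | 0 ≤ S n ω} := Nat.notMem_of_lt_sInf (lt_of_lt_of_eq hj h.symm)
      exact lt_of_not_ge this
    · rintro ⟨h1, h2⟩
      have hle : sInf {n | 0 ≤ S n ω} ≤ k := Nat.sInf_le h1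
      have hne : {n | 0 ≤ S n ω}.Nonempty := ⟨k, h1⟩
      have hmem : sInf {n | 0 ≤ S n ω} ∈ {n | 0 ≤ S n ω} := Nat.sInf_mem hne
      by_contra hne'
      have hlt : sInf {n | 0 ≤ S n ω} < k := lt_of_le_of_ne hle hne'
      exact absurd hmem (not_le.mpr (h2 _ hlt))
  have hTk1 : ∀ (k : ℕ), 1 ≤ k →
      {ω | sInf {n | 0 ≤ S n ω} = k} = {ω | 0 ≤ S k ω} ∩ ⋂ j : Fin k, {ω | S j ω < 0} := by
    intro k hk
    ext ω
    simp only [Set.mem_setOf_eq, Set.mem_inter_iff, Set.mem_iInter, hTk k hk ω]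
    constructor
    · rintro ⟨h1, h2⟩; exact ⟨h1, fun j => h2 j j.isLt⟩
    · rintro ⟨h1, h2⟩; exact ⟨h1, fun j hj => h2 ⟨j, hj⟩⟩
  have hTkMeas : ∀ k : ℕ, MeasurableSet {ω | sInf {n | 0 ≤ S n ω} = k} := by
    have hpos : ∀ k : ℕ, 1 ≤ k → MeasurableSet {ω | sInf {n | 0 ≤ S n ω} = k} := by
      intro k hk
      rw [hTk1 k hk]
      exact (measurableSet_le measurable_const (hmeas k)).inter
        (MeasurableSet.iInter fun j => measurableSet_lt (hmeas j) measurable_const)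
    intro k
    match k with
    | (k + 1) => exact hpos (k + 1) (Nat.succ_le_succ (Nat.zero_le k))
    | 0 =>
      have : {ω | sInf {n | 0 ≤ S n ω} = 0} = (⋃ j : ℕ, {ω | sInf {n | 0 ≤ S n ω} = j + 1})ᶜ := by
        ext ω
        simp only [Set.mem_setOf_eq, Set.mem_compl_iff, Set.mem_iUnion]
        constructor
        · intro h ⟨j, hj⟩; omega
        · intro h
          by_contra h0
          exact h ⟨sInf {n | 0 ≤ S n ω} - 1, by omega⟩
      rw [this]
      exact (MeasurableSet.iUnion fun j => hpos (j + 1) (Nat.succ_le_succ (Nat.zero_le j))).compl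
  have hTmeas : Measurable fun ω => sInf {n | 0 ≤ S n ω} := measurable_to_countable' fun k => hTkMeas k
  have hSTmeas : Measurable fun ω => S (sInf {n | 0 ≤ S n ω}) ω := by
    have h1 : Measurable fun p : Ω × ℕ => S p.2 p.1 :=
      measurable_from_prod_countable_left fun n => hmeas n
    exact h1.comp (measurable_id.prodMk hTmeas)
  have hAmeas : MeasurableSet A := by
    rw [hAdef]
    exact measurableSet_le measurable_snd
      ((((hSTmeas.sub measurable_const).const_mul (-θ)).exp).comp measurable_fst)
  have hTfinMeas : MeasurableSet Tfin := by
    have : Tfin = ⋃ n, {ω | 0 ≤ S n ω} := by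
      rw [hTfindef]; ext ω; simp
    rw [this]
    exact MeasurableSet.iUnion fun n => measurableSet_le measurable_const (hmeas n)
  -- T = 0 is (a.s.) impossible
  have hT0sub : {ω | sInf {n | 0 ≤ S n ω} = 0} ⊆ Tfinᶜ := by
    intro ω h0 hfin'
    obtain ⟨n, hn⟩ := hfin'
    have hne : {n | 0 ≤ S n ω}.Nonempty := ⟨n, hn⟩
    have hmem : sInf {n | 0 ≤ S n ω} ∈ {n | 0 ≤ S n ω} := Nat.sInf_mem hne
    rw [h0] at hmem
    have h00 : 0 ≤ S 0 ω := hmem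
    rw [hS0 ω] at h00
    exact absurd h00 (not_le.mpr hx)
  have hPθT0 : Pθ {ω | sInf {n | 0 ≤ S n ω} = 0} = 0 := by
    have h1 : Pθ Tfinᶜ = 0 := by
      rw [measure_compl hTfinMeas (measure_ne_top _ _)]
      rw [hTfindef] at hfin ⊢
      rw [hfin]
      simp
    exact le_antisymm (le_trans (measure_mono hT0sub) h1.le) (zero_le)
  -- comap-measurability of the relevant events
  have hComapTk : ∀ (k : ℕ), 1 ≤ k →
      MeasurableSet[MeasurableSpace.comap (fun ω (i : Fin k) => S (i + 1) ω) inferInstance]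
        {ω | sInf {n | 0 ≤ S n ω} = k} := by
    intro k hk
    refine ⟨{v : Fin k → ℝ | 0 ≤ v ⟨k - 1, by omega⟩} ∩
      ⋂ i : Fin k, {v : Fin k → ℝ | (i : ℕ) + 1 < k → v i < 0}, ?_, ?_⟩
    · exact (measurableSet_le measurable_const (measurable_pi_apply _)).inter
        (MeasurableSet.iInter fun i => by
          by_cases hc : (i : ℕ) + 1 < k
          · simp only [hc, forall_true_left]
            exact measurableSet_lt (measurable_pi_apply _) measurable_const
          · simp only [hc, false_implies, Set.setOf_true]
            exact MeasurableSet.univ)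
    · ext ω
      simp only [Set.mem_preimage, Set.mem_inter_iff, Set.mem_setOf_eq, Set.mem_iInter,
        hTk k hk ω]
      have hk1 : (k - 1) + 1 = k := by omega
      constructor
      · rintro ⟨h1, h2⟩
        rw [hk1] at h1
        refine ⟨h1, fun j hj => ?_⟩
        match j with
        | 0 => rw [hS0 ω]; exact hx
        | (j + 1) => exact h2 ⟨j, by omega⟩ (by simpa using hj)
      · rintro ⟨h1, h2⟩
        refine ⟨by rw [hk1]; exact h1, fun i hi => h2 _ hi⟩
  have hComapE : ∀ (k : ℕ) (B : Fin k → Set ℝ), (∀ i, MeasurableSet (B i)) →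
      MeasurableSet[MeasurableSpace.comap (fun ω (i : Fin k) => S (i + 1) ω) inferInstance]
        {ω | ∀ i : Fin k, S (i + 1) ω ∈ B i} := by
    intro k B hB
    refine ⟨⋂ i : Fin k, (fun v : Fin k → ℝ => v i) ⁻¹' B i,
      MeasurableSet.iInter fun i => measurable_pi_apply i (hB i), ?_⟩
    ext ω
    simp [Set.mem_iInter]
  -- the key identity
  have key : ∀ (k : ℕ), 1 ≤ k → ∀ C : Set Ω, MeasurableSet C →
      MeasurableSet[MeasurableSpace.comap (fun ω (i : Fin k) => S (i + 1) ω) inferInstance] C →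
      C ⊆ {ω | sInf {n | 0 ≤ S n ω} = k} →
      Px C = (Pθ.prod U) (A ∩ C ×ˢ Set.univ) := by
    intro k hk C hCm hCcomap hCsub
    have h1 : Px C = ∫⁻ ω in C, ENNReal.ofReal (Real.exp (-θ * (S k ω - x))) ∂Pθ :=
      hRN k hk C hCcomap
    have h2 : (Pθ.prod U) (A ∩ C ×ˢ Set.univ)
        = ∫⁻ ω, U (Prod.mk ω ⁻¹' (A ∩ C ×ˢ Set.univ)) ∂Pθ :=
      Measure.prod_apply (hAmeas.inter (hCm.prod MeasurableSet.univ))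
    have h3 : ∀ ω, U (Prod.mk ω ⁻¹' (A ∩ C ×ˢ Set.univ))
        = C.indicator (fun ω => ENNReal.ofReal (Real.exp (-θ * (S k ω - x)))) ω := by
      intro ω
      by_cases hω : ω ∈ C
      · have hTω : sInf {n | 0 ≤ S n ω} = k := hCsub hω
        have hSk : 0 ≤ S k ω := ((hTk k hk ω).mp hTω).1
        have hpre : Prod.mk ω ⁻¹' (A ∩ C ×ˢ Set.univ)
            = {u : ℝ | u ≤ Real.exp (-θ * (S k ω - x))} := by
          ext u
          have hTω' : sInf {n | 0 ≤ S n ω} = k := hTω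
          simp only [Set.mem_preimage, Set.mem_inter_iff, hAdef, Set.mem_setOf_eq,
            Set.prodMk_mem_set_prod_eq, Set.mem_univ, and_true, hω, hTω', and_true]
        have hpos : 0 < Real.exp (-θ * (S k ω - x)) := Real.exp_pos _
        have hle : Real.exp (-θ * (S k ω - x)) ≤ 1 := by
          rw [Real.exp_le_one_iff]
          nlinarith
        rw [hpre, hUdef, stmt4_unif_aux _ hpos hle, Set.indicator_of_mem hω]
      · have hpre : Prod.mk ω ⁻¹' (A ∩ C ×ˢ Set.univ) = ∅ := by
          ext u
          simp only [Set.mem_preimage, Set.mem_inter_iff, Set.prodMk_mem_set_prod_eq,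
            Set.mem_univ, and_true, Set.mem_empty_iff_false, iff_false, not_and]
          intro _
          exact hω
        rw [hpre, measure_empty, Set.indicator_of_notMem hω]
    rw [h1, h2]
    rw [lintegral_congr h3, lintegral_indicator hCm]
  -- rectangles
  have hTk'Meas : ∀ k : ℕ, MeasurableSet {p : Ω × ℝ | sInf {n | 0 ≤ S n p.1} = k} :=
    fun k => (hTkMeas k).preimage measurable_fst
  have hRect : ∀ k : ℕ, {p : Ω × ℝ | sInf {n | 0 ≤ S n p.1} = k}
      = {ω | sInf {n | 0 ≤ S n ω} = k} ×ˢ Set.univ := by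
    intro k; ext p
    simp [Set.mem_prod]
  -- numerator equality for part 1
  have hN : ∀ k : ℕ, Px (Tfin ∩ {ω | sInf {n | 0 ≤ S n ω} = k})
      = (Pθ.prod U) (A ∩ {p : Ω × ℝ | sInf {n | 0 ≤ S n p.1} = k}) := by
    intro k
    match k with
    | 0 =>
      have h1 : Tfin ∩ {ω | sInf {n | 0 ≤ S n ω} = 0} = ∅ := by
        ext ω
        simp only [Set.mem_inter_iff, Set.mem_empty_iff_false, iff_false, not_and]
        intro hf h0
        exact hT0sub h0 hf
      have h2 : (Pθ.prod U) (A ∩ {p : Ω × ℝ | sInf {n | 0 ≤ S n p.1} = 0}) = 0 := by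
        refine measure_mono_null
          (t := {ω | sInf {n | 0 ≤ S n ω} = 0} ×ˢ (Set.univ : Set ℝ)) ?_ ?_
        · exact Set.inter_subset_right.trans (le_of_eq (hRect 0))
        · rw [Measure.prod_prod, hPθT0, zero_mul]
      rw [h1, h2, measure_empty]
    | (k + 1) =>
      have hk : 1 ≤ k + 1 := Nat.succ_le_succ (Nat.zero_le k)
      have hsub : Tfin ∩ {ω | sInf {n | 0 ≤ S n ω} = k + 1}
          = {ω | sInf {n | 0 ≤ S n ω} = k + 1} := by
        refine Set.inter_eq_self_of_subset_right fun ω hω => ?_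
        exact ⟨k + 1, ((hTk (k + 1) hk ω).mp hω).1⟩
      rw [hsub, hRect]
      exact key (k + 1) hk _ (hTkMeas _) (hComapTk _ hk) (fun ω hω => hω)
  -- decompositions and the denominators
  have hdisj1 : Pairwise (Function.onFun Disjoint
      fun k => Tfin ∩ {ω | sInf {n | 0 ≤ S n ω} = k}) := by
    intro i j hij
    refine Set.disjoint_left.mpr ?_
    rintro ω ⟨_, hi⟩ ⟨_, hj⟩
    simp only [Set.mem_setOf_eq] at hi hj
    exact hij (hi.symm.trans hj)
  have hdisj2 : Pairwise (Function.onFun Disjoint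
      fun k => A ∩ {p : Ω × ℝ | sInf {n | 0 ≤ S n p.1} = k}) := by
    intro i j hij
    refine Set.disjoint_left.mpr ?_
    rintro p ⟨_, hi⟩ ⟨_, hj⟩
    simp only [Set.mem_setOf_eq] at hi hj
    exact hij (hi.symm.trans hj)
  have hdecT : Tfin = ⋃ k : ℕ, (Tfin ∩ {ω | sInf {n | 0 ≤ S n ω} = k}) := by
    ext ω
    simp only [Set.mem_iUnion, Set.mem_inter_iff, Set.mem_setOf_eq]
    exact ⟨fun h => ⟨sInf {n | 0 ≤ S n ω}, h, rfl⟩, fun ⟨k, h, _⟩ => h⟩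
  have hdecA : A = ⋃ k : ℕ, (A ∩ {p : Ω × ℝ | sInf {n | 0 ≤ S n p.1} = k}) := by
    ext p
    simp only [Set.mem_iUnion, Set.mem_inter_iff, Set.mem_setOf_eq]
    exact ⟨fun h => ⟨sInf {n | 0 ≤ S n p.1}, h, rfl⟩, fun ⟨k, h, _⟩ => h⟩
  have hD : Px Tfin = (Pθ.prod U) A := by
    conv_lhs => rw [hdecT]
    conv_rhs => rw [hdecA]
    rw [measure_iUnion hdisj1 (fun k => hTfinMeas.inter (hTkMeas k)),
      measure_iUnion hdisj2 (fun k => hAmeas.inter (hTk'Meas k))]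
    exact tsum_congr hN
  constructor
  · intro k
    rw [cond_apply hTfinMeas Px, cond_apply hAmeas (Pθ.prod U), hD]
    congr 1
    exact hN k
  · intro k hk B hB
    rw [cond_apply (hTkMeas k) Px, cond_apply (hAmeas.inter (hTk'Meas k)) (Pθ.prod U)]
    have hE : MeasurableSet[MeasurableSpace.comap
        (fun ω (i : Fin k) => S (i + 1) ω) inferInstance]
        ({ω | sInf {n | 0 ≤ S n ω} = k} ∩ {ω | ∀ i : Fin k, S (i + 1) ω ∈ B i}) :=
      MeasurableSet.inter (hComapTk k hk) (hComapE k B hB)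
    have hEmeas : MeasurableSet {ω | ∀ i : Fin k, S (i + 1) ω ∈ B i} := by
      have h : {ω | ∀ i : Fin k, S (i + 1) ω ∈ B i} = ⋂ i : Fin k, (S (i + 1)) ⁻¹' B i := by
        ext ω; simp [Set.mem_iInter]
      rw [h]
      exact MeasurableSet.iInter fun i => (hmeas _) (hB i)
    -- denominator
    have hDen : Px {ω | sInf {n | 0 ≤ S n ω} = k}
        = (Pθ.prod U) (A ∩ {p : Ω × ℝ | sInf {n | 0 ≤ S n p.1} = k}) := by
      rw [hRect]
      exact key k hk _ (hTkMeas k) (hComapTk k hk) (fun ω hω => hω)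
    -- numerator
    have hNum : Px ({ω | sInf {n | 0 ≤ S n ω} = k} ∩ {ω | ∀ i : Fin k, S (i + 1) ω ∈ B i})
        = (Pθ.prod U) ((A ∩ {p : Ω × ℝ | sInf {n | 0 ≤ S n p.1} = k})
            ∩ {p : Ω × ℝ | ∀ i : Fin k, S (i + 1) p.1 ∈ B i}) := by
      have hset : (A ∩ {p : Ω × ℝ | sInf {n | 0 ≤ S n p.1} = k})
          ∩ {p : Ω × ℝ | ∀ i : Fin k, S (i + 1) p.1 ∈ B i}
          = A ∩ ({ω | sInf {n | 0 ≤ S n ω} = k}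
              ∩ {ω | ∀ i : Fin k, S (i + 1) ω ∈ B i}) ×ˢ Set.univ := by
        have hY : {p : Ω × ℝ | ∀ i : Fin k, S (i + 1) p.1 ∈ B i}
            = {ω | ∀ i : Fin k, S (i + 1) ω ∈ B i} ×ˢ Set.univ := by
          ext p; simp [Set.mem_prod]
        rw [Set.inter_assoc, hRect, hY, Set.prod_inter_prod, Set.inter_self]
      rw [hset]
      exact key k hk _ ((hTkMeas k).inter hEmeas) hE Set.inter_subset_left
    rw [hDen, hNum]
end

section
/- Let a ∈ (0,1], C ∈ ℝ, σ̄ > 0, n₀ ≥ 1 an integer, and let g_{n₀}(k) = ∫_{k−1}^k φ((a log(n₀+s)+C)/σ̄) ds / ∫_0^∞ φ((a log(n₀+s)+C)/σ̄) ds for k ≥ 1. If U is uniform on (0,1), then the random variable ⌈exp( σ̄²/a² − C/a + (σ̄/a) Φ̄^{-1}( U · Φ̄((a log n₀ + C)/σ̄ − σ̄/a) ) ) − n₀ ⌉ has probability mass function g_{n₀}. -/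
open MeasureTheory

/-- The standard normal density. -/
noncomputable def gaussPDF (t : ℝ) : ℝ := (Real.sqrt (2 * Real.pi))⁻¹ * Real.exp (-t ^ 2 / 2)

/-- The standard normal survival function Φ̄ = 1 − Φ. -/
noncomputable def gaussTail (t : ℝ) : ℝ := ∫ s in Set.Ioi t, gaussPDF s

/-- The inverse of the standard normal survival function. -/
noncomputable def gaussTailInv : ℝ → ℝ := Function.invFun gaussTail

lemma gaussPDF_pos (t : ℝ) : 0 < gaussPDF t := by
  unfold gaussPDF
  positivity

lemma continuous_gaussPDF : Continuous gaussPDF := by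
  unfold gaussPDF
  continuity

lemma integrable_gaussPDF : Integrable gaussPDF := by
  have h := (integrable_exp_neg_mul_sq (b := (2:ℝ)⁻¹) (by norm_num)).const_mul
      (Real.sqrt (2 * Real.pi))⁻¹
  have : gaussPDF = fun x => (Real.sqrt (2 * Real.pi))⁻¹ * Real.exp (-(2:ℝ)⁻¹ * x ^ 2) := by
    funext x; unfold gaussPDF; ring_nf
  rw [this]; exact h

lemma integral_gaussPDF : ∫ t, gaussPDF t = 1 := by
  unfold gaussPDF
  rw [MeasureTheory.integral_const_mul]
  have : ∀ t : ℝ, Real.exp (-t ^ 2 / 2) = Real.exp (-(2⁻¹) * t ^ 2) := by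
    intro t; ring_nf
  simp_rw [this, integral_gaussian]
  rw [inv_mul_eq_div, div_eq_one_iff_eq]
  · rw [show Real.pi / 2⁻¹ = 2 * Real.pi by ring]
  · positivity

lemma gaussTail_sub {x y : ℝ} (h : x ≤ y) :
    gaussTail x = (∫ t in Set.Ioc x y, gaussPDF t) + gaussTail y := by
  unfold gaussTail
  rw [← Set.Ioc_union_Ioi_eq_Ioi h,
    setIntegral_union (Set.Ioc_disjoint_Ioi le_rfl) measurableSet_Ioi
      integrable_gaussPDF.integrableOn integrable_gaussPDF.integrableOn]

lemma intIoc_pos {x y : ℝ} (h : x < y) : 0 < ∫ t in Set.Ioc x y, gaussPDF t := by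
  rw [← intervalIntegral.integral_of_le h.le]
  apply intervalIntegral.intervalIntegral_pos_of_pos_on
    integrable_gaussPDF.intervalIntegrable
    (fun t _ => gaussPDF_pos t) h

lemma strictAnti_gaussTail : StrictAnti gaussTail := by
  intro x y h
  rw [gaussTail_sub h.le]
  linarith [intIoc_pos h]

lemma gaussTail_pos (t : ℝ) : 0 < gaussTail t := by
  unfold gaussTail
  rw [setIntegral_pos_iff_support_of_nonneg_ae
    (Filter.Eventually.of_forall (fun t => (gaussPDF_pos t).le))
    integrable_gaussPDF.integrableOn]
  have : Function.support gaussPDF ∩ Set.Ioi t = Set.Ioi t := by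
    apply Set.inter_eq_self_of_subset_right
    intro x _; exact (gaussPDF_pos x).ne'
  rw [this]
  simp [Real.volume_Ioi]

lemma gaussTail_lt_one (t : ℝ) : gaussTail t < 1 := by
  have h1 : ∫ s, gaussPDF s = (∫ s in Set.Iic t, gaussPDF s) + gaussTail t := by
    unfold gaussTail
    rw [← setIntegral_union (Set.Iic_disjoint_Ioi le_rfl) measurableSet_Ioi
      integrable_gaussPDF.integrableOn integrable_gaussPDF.integrableOn,
      Set.Iic_union_Ioi, setIntegral_univ]
  have h2 : 0 < ∫ s in Set.Iic t, gaussPDF s := by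
    rw [setIntegral_pos_iff_support_of_nonneg_ae
      (Filter.Eventually.of_forall (fun t => (gaussPDF_pos t).le))
      integrable_gaussPDF.integrableOn]
    have : Function.support gaussPDF ∩ Set.Iic t = Set.Iic t := by
      apply Set.inter_eq_self_of_subset_right
      intro x _; exact (gaussPDF_pos x).ne'
    rw [this]
    simp [Real.volume_Iic]
  rw [integral_gaussPDF] at h1
  linarith

lemma continuous_gaussTail : Continuous gaussTail := by
  have h : ∀ t : ℝ, gaussTail t = gaussTail 0 - ∫ s in (0:ℝ)..t, gaussPDF s := by
    intro t
    rcases le_or_gt 0 t with h | h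
    · rw [intervalIntegral.integral_of_le h]
      rw [gaussTail_sub h]; ring
    · rw [intervalIntegral.integral_symm, intervalIntegral.integral_of_le h.le]
      rw [gaussTail_sub (y := 0) h.le]; ring
  have : gaussTail = fun t => gaussTail 0 - ∫ s in (0:ℝ)..t, gaussPDF s := funext h
  rw [this]
  exact continuous_const.sub (intervalIntegral.continuous_primitive
    (fun a b => integrable_gaussPDF.intervalIntegrable) 0)

lemma gaussTail_tendsto_small {v : ℝ} (hv : 0 < v) : ∃ x : ℝ, gaussTail x < v := by
  have hU : ⋃ n : ℕ, Set.Ioc (0:ℝ) n = Set.Ioi 0 := by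
    ext x
    simp only [Set.mem_iUnion, Set.mem_Ioc, Set.mem_Ioi]
    constructor
    · rintro ⟨n, h, _⟩; exact h
    · intro h
      obtain ⟨n, hn⟩ := exists_nat_ge x
      exact ⟨n, h, hn⟩
  have hmc := MeasureTheory.tendsto_setIntegral_of_monotone
    (f := gaussPDF) (μ := volume) (s := fun n : ℕ => Set.Ioc (0:ℝ) n)
    (fun n => measurableSet_Ioc)
    (fun i j hij => Set.Ioc_subset_Ioc le_rfl (by exact_mod_cast hij))
    (by rw [hU]; exact integrable_gaussPDF.integrableOn)
  rw [hU] at hmc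
  have h2 : Filter.Tendsto (fun n : ℕ => gaussTail n) Filter.atTop (nhds 0) := by
    have heq : ∀ n : ℕ, gaussTail n = gaussTail 0 - ∫ t in Set.Ioc (0:ℝ) n, gaussPDF t := by
      intro n; rw [gaussTail_sub (by positivity : (0:ℝ) ≤ n)]; ring
    simp_rw [heq]
    have h3 := Filter.Tendsto.const_sub (gaussTail 0) hmc
    simpa [gaussTail] using h3
  obtain ⟨n, hn⟩ := (h2.eventually (eventually_lt_nhds hv)).exists
  exact ⟨n, hn⟩

lemma gaussTail_tendsto_big {v : ℝ} (hv : v < 1) : ∃ x : ℝ, v < gaussTail x := by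
  have hU : ⋃ n : ℕ, Set.Ioi (-(n:ℝ)) = Set.univ := by
    ext x
    simp only [Set.mem_iUnion, Set.mem_Ioi, Set.mem_univ, iff_true]
    obtain ⟨n, hn⟩ := exists_nat_gt (-x)
    exact ⟨n, by linarith⟩
  have h := MeasureTheory.tendsto_setIntegral_of_monotone
    (f := gaussPDF) (μ := volume) (s := fun n : ℕ => Set.Ioi (-(n:ℝ)))
    (fun n => measurableSet_Ioi)
    (fun i j hij => Set.Ioi_subset_Ioi (by exact_mod_cast neg_le_neg (Nat.cast_le.2 hij)))
    (by rw [hU]; exact integrable_gaussPDF.integrableOn)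
  rw [hU, setIntegral_univ, integral_gaussPDF] at h
  have h2 : Filter.Tendsto (fun n : ℕ => gaussTail (-(n:ℝ))) Filter.atTop (nhds 1) := h
  obtain ⟨n, hn⟩ := (h2.eventually (eventually_gt_nhds hv)).exists
  exact ⟨-(n:ℝ), hn⟩

lemma gaussTail_surj {v : ℝ} (h0 : 0 < v) (h1 : v < 1) : ∃ x, gaussTail x = v := by
  obtain ⟨x₂, hx₂⟩ := gaussTail_tendsto_small h0
  obtain ⟨x₁, hx₁⟩ := gaussTail_tendsto_big h1
  have hle : x₁ ≤ x₂ := by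
    by_contra h
    push_neg at h
    have := strictAnti_gaussTail h
    linarith
  have := intermediate_value_Icc' hle (continuous_gaussTail.continuousOn)
  obtain ⟨x, _, hx⟩ := this ⟨hx₂.le, hx₁.le⟩
  exact ⟨x, hx⟩

lemma gaussTailInv_gaussTail (x : ℝ) : gaussTailInv (gaussTail x) = x :=
  Function.leftInverse_invFun strictAnti_gaussTail.injective x

lemma gaussTail_gaussTailInv {v : ℝ} (h0 : 0 < v) (h1 : v < 1) :
    gaussTail (gaussTailInv v) = v := by
  obtain ⟨x, hx⟩ := gaussTail_surj h0 h1
  rw [← hx, gaussTailInv_gaussTail]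

/-- The explicit ceiling transform of a uniform random variable has
probability mass function `g_{n₀}`. -/
theorem stmt6 (a C σ : ℝ) (n₀ : ℕ) (hn₀ : 1 ≤ n₀) (ha : 0 < a) (ha1 : a ≤ 1) (hσ : 0 < σ) :
    ∀ k : ℕ, 1 ≤ k →
      (volume.restrict (Set.Ioo (0 : ℝ) 1))
        {u : ℝ | ⌈Real.exp (σ ^ 2 / a ^ 2 - C / a
            + (σ / a) * gaussTailInv (u * gaussTail ((a * Real.log n₀ + C) / σ - σ / a)))
            - (n₀ : ℝ)⌉ = (k : ℤ)}
      = ENNReal.ofReal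
          ((∫ s in Set.Ioc ((k : ℝ) - 1) (k : ℝ), gaussPDF ((a * Real.log ((n₀ : ℝ) + s) + C) / σ))
            / ∫ s in Set.Ioi (0 : ℝ), gaussPDF ((a * Real.log ((n₀ : ℝ) + s) + C) / σ)) := by
  intro k hk
  have hk1 : (1:ℝ) ≤ (k:ℝ) := by exact_mod_cast hk
  have hn1 : (1:ℝ) ≤ (n₀:ℝ) := by exact_mod_cast hn₀
  have hsa : (0:ℝ) < σ / a := div_pos hσ ha
  set f : ℝ → ℝ := fun t => Real.exp (σ^2/a^2 - C/a + σ/a * t) - n₀ with hfdef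
  set f' : ℝ → ℝ := fun t => σ/a * Real.exp (σ^2/a^2 - C/a + σ/a * t) with hf'def
  set w : ℝ → ℝ := fun y => (a * Real.log ((n₀:ℝ) + y) + C)/σ - σ/a with hwdef
  set c' : ℝ := σ/a * Real.exp (σ^2/(2*a^2) - C/a) with hc'def
  have hc'pos : 0 < c' := by rw [hc'def]; positivity
  -- f inverts w
  have hfw : ∀ y : ℝ, 0 < (n₀:ℝ) + y → f (w y) = y := by
    intro y hy
    have hlog : σ^2/a^2 - C/a + σ/a * w y = Real.log ((n₀:ℝ) + y) := by
      rw [hwdef]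
      field_simp
      ring
    show Real.exp (σ^2/a^2 - C/a + σ/a * w y) - n₀ = y
    rw [hlog, Real.exp_log hy]; ring
  have hmono : StrictMono f := by
    intro x y hxy
    have h1 : σ^2/a^2 - C/a + σ/a*x < σ^2/a^2 - C/a + σ/a*y := by nlinarith
    have := Real.exp_lt_exp.2 h1
    show Real.exp _ - _ < Real.exp _ - _
    linarith
  have hfd : ∀ x : ℝ, HasDerivAt f (f' x) x := by
    intro x
    have h1 : HasDerivAt (fun t : ℝ => σ^2/a^2 - C/a + σ/a * t) (σ/a) x := by
      simpa using ((hasDerivAt_id x).const_mul (σ/a)).const_add (σ^2/a^2 - C/a)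
    have h3 := h1.exp.sub_const (n₀:ℝ)
    have he : f' x = Real.exp (σ^2/a^2 - C/a + σ/a*x) * (σ/a) := by rw [hf'def]; ring
    rw [he]
    exact h3
  have hkey : ∀ t : ℝ,
      |f' t| • gaussPDF ((a * Real.log ((n₀:ℝ) + f t) + C)/σ) = c' * gaussPDF t := by
    intro t
    have hnf : (n₀:ℝ) + f t = Real.exp (σ^2/a^2 - C/a + σ/a*t) := by
      show (n₀:ℝ) + (Real.exp _ - n₀) = _
      ring
    have harg : (a * (σ^2/a^2 - C/a + σ/a*t) + C)/σ = t + σ/a := by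
      field_simp
      ring
    rw [hnf, Real.log_exp, harg]
    have habs : |f' t| = σ/a * Real.exp (σ^2/a^2 - C/a + σ/a*t) := by
      rw [hf'def]; exact abs_of_pos (by positivity)
    rw [habs, smul_eq_mul, hc'def]
    unfold gaussPDF
    have hee : Real.exp (σ^2/a^2 - C/a + σ/a*t) * Real.exp (-(t+σ/a)^2/2)
        = Real.exp (σ^2/(2*a^2) - C/a) * Real.exp (-t^2/2) := by
      rw [← Real.exp_add, ← Real.exp_add]
      congr 1
      field_simp
      ring
    linear_combination (σ/a * (Real.sqrt (2*Real.pi))⁻¹) * hee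
  have hsub : ∀ s : Set ℝ, MeasurableSet s →
      (∫ x in f '' s, gaussPDF ((a * Real.log ((n₀:ℝ) + x) + C)/σ))
        = c' * ∫ t in s, gaussPDF t := by
    intro s hs
    rw [integral_image_eq_integral_abs_deriv_smul hs
      (fun x _ => (hfd x).hasDerivWithinAt) hmono.injective.injOn]
    simp_rw [hkey]
    exact integral_const_mul c' _
  -- comparisons of w values
  have hwlt : ∀ y z : ℝ, 0 < (n₀:ℝ)+y → 0 < (n₀:ℝ)+z → (w y < w z ↔ y < z) := by
    intro y z hy hz
    rw [← hmono.lt_iff_lt, hfw y hy, hfw z hz]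
  have hwle : ∀ y z : ℝ, 0 < (n₀:ℝ)+y → 0 < (n₀:ℝ)+z → (w y ≤ w z ↔ y ≤ z) := by
    intro y z hy hz
    rw [← hmono.le_iff_le, hfw y hy, hfw z hz]
  have hp0 : (0:ℝ) < (n₀:ℝ) + 0 := by linarith
  have hpk : (0:ℝ) < (n₀:ℝ) + (k:ℝ) := by linarith
  have hpk1 : (0:ℝ) < (n₀:ℝ) + ((k:ℝ) - 1) := by linarith
  -- images
  have himg1 : f '' Set.Ioi (w 0) = Set.Ioi (0:ℝ) := by
    ext y
    constructor
    · rintro ⟨t, ht, rfl⟩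
      have : f (w 0) < f t := hmono ht
      rw [hfw 0 hp0] at this
      exact this
    · intro hy
      have hy' : (0:ℝ) < y := hy
      exact ⟨w y, (hwlt 0 y hp0 (by linarith)).2 hy', hfw y (by linarith)⟩
  have himg2 : f '' Set.Ioc (w ((k:ℝ)-1)) (w (k:ℝ)) = Set.Ioc ((k:ℝ)-1) (k:ℝ) := by
    ext y
    constructor
    · rintro ⟨t, ⟨ht1, ht2⟩, rfl⟩
      have h1 : f (w ((k:ℝ)-1)) < f t := hmono ht1
      have h2 : f t ≤ f (w (k:ℝ)) := hmono.le_iff_le.2 ht2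
      rw [hfw _ hpk1] at h1
      rw [hfw _ hpk] at h2
      exact ⟨h1, h2⟩
    · rintro ⟨hy1, hy2⟩
      have hy' : 0 < (n₀:ℝ) + y := by linarith
      exact ⟨w y, ⟨(hwlt _ y hpk1 hy').2 hy1, (hwle y _ hy' hpk).2 hy2⟩, hfw y hy'⟩
  -- numerator and denominator
  have hnum : (∫ s in Set.Ioc ((k:ℝ)-1) (k:ℝ), gaussPDF ((a * Real.log ((n₀:ℝ) + s) + C)/σ))
      = c' * (gaussTail (w ((k:ℝ)-1)) - gaussTail (w (k:ℝ))) := by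
    rw [← himg2, hsub _ measurableSet_Ioc]
    congr 1
    have hle : w ((k:ℝ)-1) ≤ w (k:ℝ) := (hwle _ _ hpk1 hpk).2 (by linarith)
    have := gaussTail_sub hle
    linarith
  have hden : (∫ s in Set.Ioi (0:ℝ), gaussPDF ((a * Real.log ((n₀:ℝ) + s) + C)/σ))
      = c' * gaussTail (w 0) := by
    rw [← himg1, hsub _ measurableSet_Ioi]
    rfl
  -- alpha, beta
  have hgb : 0 < gaussTail (w 0) := gaussTail_pos (w 0)
  set A : ℝ := gaussTail (w (k:ℝ)) / gaussTail (w 0) with hAdef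
  set B : ℝ := gaussTail (w ((k:ℝ)-1)) / gaussTail (w 0) with hBdef
  have hA : 0 < A := div_pos (gaussTail_pos _) hgb
  have hB1 : B ≤ 1 := by
    rw [hBdef, div_le_one hgb]
    exact strictAnti_gaussTail.antitone ((hwle 0 _ hp0 hpk1).2 (by linarith))
  have hb0 : (a * Real.log (n₀:ℝ) + C) / σ - σ / a = w 0 := by
    rw [hwdef]; norm_num
  -- the event as an interval
  have hiff : ∀ u : ℝ, 0 < u → u < 1 →
      ((⌈Real.exp (σ ^ 2 / a ^ 2 - C / a
          + (σ / a) * gaussTailInv (u * gaussTail ((a * Real.log n₀ + C) / σ - σ / a)))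
          - (n₀ : ℝ)⌉ = (k : ℤ)) ↔ (A ≤ u ∧ u < B)) := by
    intro u hu0 hu1
    have hv0 : 0 < u * gaussTail (w 0) := mul_pos hu0 hgb
    have hv1 : u * gaussTail (w 0) < 1 := by nlinarith [gaussTail_lt_one (w 0)]
    set t := gaussTailInv (u * gaussTail (w 0)) with htdef
    have hgt : gaussTail t = u * gaussTail (w 0) := gaussTail_gaussTailInv hv0 hv1
    have hexp : Real.exp (σ ^ 2 / a ^ 2 - C / a
          + (σ / a) * gaussTailInv (u * gaussTail ((a * Real.log n₀ + C) / σ - σ / a)))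
          - (n₀ : ℝ) = f t := by
      rw [hb0, hfdef]
    rw [hexp, Int.ceil_eq_iff]
    push_cast
    have e1 : f t ≤ (k:ℝ) ↔ A ≤ u := by
      rw [← hfw (k:ℝ) hpk, hmono.le_iff_le, ← strictAnti_gaussTail.le_iff_ge, hgt,
        hAdef, div_le_iff₀ hgb]
    have e2 : (k:ℝ) - 1 < f t ↔ u < B := by
      rw [← hfw ((k:ℝ)-1) hpk1, hmono.lt_iff_lt, ← strictAnti_gaussTail.lt_iff_gt, hgt,
        hBdef, lt_div_iff₀ hgb]
    constructor
    · rintro ⟨p, q⟩; exact ⟨e1.1 q, e2.1 p⟩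
    · rintro ⟨p, q⟩; exact ⟨e2.2 q, e1.2 p⟩
  have hset : {u : ℝ | ⌈Real.exp (σ ^ 2 / a ^ 2 - C / a
          + (σ / a) * gaussTailInv (u * gaussTail ((a * Real.log n₀ + C) / σ - σ / a)))
          - (n₀ : ℝ)⌉ = (k : ℤ)} ∩ Set.Ioo (0:ℝ) 1 = Set.Ico A B := by
    ext u
    simp only [Set.mem_inter_iff, Set.mem_setOf_eq, Set.mem_Ioo, Set.mem_Ico]
    constructor
    · rintro ⟨hc, hu0, hu1⟩
      exact (hiff u hu0 hu1).1 hc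
    · rintro ⟨h1, h2⟩
      have hu0 : 0 < u := lt_of_lt_of_le hA h1
      have hu1 : u < 1 := lt_of_lt_of_le h2 hB1
      exact ⟨(hiff u hu0 hu1).2 ⟨h1, h2⟩, hu0, hu1⟩
  rw [Measure.restrict_apply' measurableSet_Ioo, hset, Real.volume_Ico, hnum, hden,
    mul_div_mul_left _ _ hc'pos.ne', sub_div]
end
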